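/- Under the hypotheses of the canonical ℓ-matrix theorem (G = (g,[,],ϖ,φ) canonically compatible with the reductive decomposition g = l ⊕ m, double d, p ∈ U ⊆ l* such that p_g ∘ Ad^d_{e^{−sp}} ∘ i_g is invertible), define l^can_p ξ = −(p_g Ad_{e^{−sp}} i_g)⁻¹ p_g Ad_{e^{−sp}} ξ for ξ ∈ l^⊥. Then Ad_{e^{−sp}}(l^can_p ξ + ξ) ∈ g*, and more precisely Ad_{e^{−sp}}(l^can_p ξ + ξ) = (p_{g*} Ad_{e^{sp}} i_{g*})⁻¹ ξ. -/

import Mathlib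

/-!
By linearity the `g`-component of `f (x, ξ)` is `A x + p_g (f (0, ξ))`, which the choice
`x = l^can_p ξ` kills. Once `f (x, ξ) = (0, η)`, applying `f⁻¹` gives `B η = ξ`.
-/

section

/-- The bracket of the canonical double `d = g ⊕ g*` of a Lie quasi-bialgebra
`(g, [,], ϖ, φ)`, where `c ξ η = ⟨ξ⊗η⊗1, φ⟩`. -/
def brD {K L : Type*} [Field K] [LieRing L] [LieAlgebra K L]
    (ϖ : L →ₗ[K] Module.Dual K L →ₗ[K] L)
    (c : Module.Dual K L →ₗ[K] Module.Dual K L →ₗ[K] L) :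
    L × Module.Dual K L → L × Module.Dual K L → L × Module.Dual K L :=
  fun X Y =>
    (⁅X.1, Y.1⁆ + ϖ X.1 Y.2 - ϖ Y.1 X.2 + c X.2 Y.2,
      - Y.2 ∘ₗ LieAlgebra.ad K L X.1 + X.2 ∘ₗ LieAlgebra.ad K L Y.1
        + Y.2 ∘ₗ ϖ.flip X.2)

namespace LinearEquiv

variable {R N : Type*} [Semiring R] [AddCommMonoid N] [Module R N]

theorem fst_apply_neg_symm_fst_apply_inr {M : Type*} [AddCommGroup M] [Module R M]
    (f : (M × N) ≃ₗ[R] (M × N)) (A : M ≃ₗ[R] M) (hA : ∀ x, A x = (f (x, 0)).1)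
    (ξ : N) : (f (-A.symm (f (0, ξ)).1, ξ)).1 = 0 := by
  set x := -A.symm (f (0, ξ)).1
  calc (f (x, ξ)).1 = (f (x, 0)).1 + (f (0, ξ)).1 := by
        rw [← Prod.fst_add, ← map_add, Prod.mk_add_mk, add_zero, zero_add]
    _ = 0 := by rw [← hA, map_neg, apply_symm_apply, neg_add_cancel]

theorem apply_eq_inr_symm_of_fst_eq_zero {M : Type*} [AddCommMonoid M] [Module R M]
    (f : (M × N) ≃ₗ[R] (M × N)) (B : N ≃ₗ[R] N) (hB : ∀ η, B η = (f.symm (0, η)).2)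
    {z : M × N} (hz : (f z).1 = 0) : f z = (0, B.symm z.2) := by
  have hfz : f z = (0, (f z).2) := Prod.ext hz rfl
  have hBη : B (f z).2 = z.2 := by rw [hB, ← hfz, symm_apply_apply]
  rw [hfz, ← hBη, symm_apply_apply]

end LinearEquiv

theorem stmt_18_general {K L : Type*} [Field K] [LieRing L] [LieAlgebra K L]
    (l : Submodule K L)
    (f : (L × Module.Dual K L) ≃ₗ[K] (L × Module.Dual K L))
    -- `p_g ∘ Ad_{e^{−sp}} ∘ i_g` is invertible, with inverse packaged in `A`
    (A : L ≃ₗ[K] L) (hA : ∀ x : L, A x = (f (x, 0)).1)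
    -- `p_{g*} ∘ Ad_{e^{sp}} ∘ i_{g*}` is invertible, with inverse packaged in `B`
    (B : Module.Dual K L ≃ₗ[K] Module.Dual K L)
    (hB : ∀ ξ : Module.Dual K L, B ξ = (f.symm (0, ξ)).2) :
    ∀ ξ ∈ l.dualAnnihilator,
      f (- A.symm ((f (0, ξ)).1), ξ) = (0, B.symm ξ) := fun ξ _ =>
  f.apply_eq_inr_symm_of_fst_eq_zero B hB (f.fst_apply_neg_symm_fst_apply_inr A hA ξ)

/-- Let `f` be the Lie automorphism `Ad_{e^{−sp}}` of the double `d = g ⊕ g*`, with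
`A = p_g ∘ f ∘ i_g` and `B = p_{g*} ∘ f⁻¹ ∘ i_{g*}` invertible (so `f⁻¹ = Ad_{e^{sp}}`).
Setting `l^can_p ξ = −A⁻¹(p_g (f ξ))` for `ξ ∈ l^⊥`, one has
`f(l^can_p ξ + ξ) ∈ g*` and more precisely `f(l^can_p ξ + ξ) = B⁻¹ ξ`. -/
theorem stmt_18 {K L : Type*} [Field K] [LieRing L] [LieAlgebra K L]
    (l : Submodule K L)
    (ϖ : L →ₗ[K] Module.Dual K L →ₗ[K] L)
    (c : Module.Dual K L →ₗ[K] Module.Dual K L →ₗ[K] L)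
    (f : (L × Module.Dual K L) ≃ₗ[K] (L × Module.Dual K L))
    -- `f` is an automorphism of the double (standing for `Ad_{e^{−sp}}`)
    (hf : ∀ X Y, f (brD ϖ c X Y) = brD ϖ c (f X) (f Y))
    -- `p_g ∘ Ad_{e^{−sp}} ∘ i_g` is invertible, with inverse packaged in `A`
    (A : L ≃ₗ[K] L) (hA : ∀ x : L, A x = (f (x, 0)).1)
    -- `p_{g*} ∘ Ad_{e^{sp}} ∘ i_{g*}` is invertible, with inverse packaged in `B`
    (B : Module.Dual K L ≃ₗ[K] Module.Dual K L)
    (hB : ∀ ξ : Module.Dual K L, B ξ = (f.symm (0, ξ)).2) :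
    ∀ ξ ∈ l.dualAnnihilator,
      f (- A.symm ((f (0, ξ)).1), ξ) = (0, B.symm ξ) :=
  stmt_18_general l f A hA B hB

end
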